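/- arXiv:0803.3867 — 2 statements merged into one kernel-verified Lean document; each statement's English description precedes it below -/
import Mathlib

section
/- Let H be a complex Hilbert space and let ∘ : E(H) × E(H) → E(H) satisfy the duality condition: A∘ρ is trace-class and Tr((A∘ρ)B) = Tr(ρ(A∘B)) for all ρ ∈ D(H) and A,B ∈ E(H). Then for all A,B,C ∈ E(H) such that B + C ∈ E(H), one has A∘(B+C) = A∘B + A∘C. -/
/-!
Common setup: effects, density operators, trace, square roots and the strong
operator topology on a complex Hilbert space `H`, together with the five
conditions (duality, unit, weak associativity, continuity, purity) defining a
sequential product on the set `E(H)` of quantum effects.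
-/

set_option maxHeartbeats 1000000
set_option synthInstance.maxHeartbeats 1000000

open scoped InnerProductSpace ComplexOrder
open Filter

noncomputable section

variable (H : Type*) [NormedAddCommGroup H] [InnerProductSpace ℂ H] [CompleteSpace H]

/-- The index set of a fixed Hilbert basis of `H`. -/
def stdIdx : Set H := (exists_hilbertBasis ℂ H).choose

/-- A fixed Hilbert basis of `H`. -/
def stdBasis : HilbertBasis (stdIdx H) ℂ H := (exists_hilbertBasis ℂ H).choose_spec.choose

variable {H}

/-- The positive square root `A^{1/2}` of a (positive) operator `A`. -/
def sqrtOp (A : H →L[ℂ] H) : H →L[ℂ] H := CFC.sqrt A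

/-- The trace of an operator, computed in the fixed Hilbert basis. -/
def traceOp (T : H →L[ℂ] H) : ℂ := ∑' i, ⟪(stdBasis H i : H), T (stdBasis H i)⟫_ℂ

/-- `T` is trace-class: `|T| = (T*T)^{1/2}` has finite trace. -/
def IsTraceClass (T : H →L[ℂ] H) : Prop :=
  Summable fun i => ⟪(stdBasis H i : H), sqrtOp (star T * T) (stdBasis H i)⟫_ℂ

/-- A quantum effect: an operator `A` with `0 ≤ A ≤ 1` in the Loewner order (in
particular `A` is bounded and self-adjoint).  `E(H)` is the set of effects. -/
def IsEffect (A : H →L[ℂ] H) : Prop := 0 ≤ A ∧ A ≤ 1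

/-- A density operator: a positive trace-class operator of unit trace.
`D(H)` is the set of density operators. -/
def IsDensity (ρ : H →L[ℂ] H) : Prop := 0 ≤ ρ ∧ IsTraceClass ρ ∧ traceOp ρ = 1

variable (H) in
/-- The strong operator topology on bounded operators: the topology of pointwise
convergence (as maps into `H` with its norm topology). -/
def sot : TopologicalSpace (H →L[ℂ] H) :=
  TopologicalSpace.induced (fun T => (T : H → H)) inferInstance

/-- `p` is a rank-one orthogonal projection. -/
def IsRankOneProjection (p : H →L[ℂ] H) : Prop :=
  IsIdempotentElem p ∧ IsSelfAdjoint p ∧ LinearMap.rank (p : H →ₗ[ℂ] H) = 1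

/-- `P_ψ`: the rank-one orthogonal projection onto the span of a unit vector `ψ`,
`x ↦ ⟪ψ, x⟫ • ψ`. -/
def projVec (ψ : H) : H →L[ℂ] H := (innerSL ℂ ψ).smulRight ψ

/-- `op` is a binary operation on `E(H)`: it maps pairs of effects to effects. -/
def EffectClosed (op : (H →L[ℂ] H) → (H →L[ℂ] H) → (H →L[ℂ] H)) : Prop :=
  ∀ A B, IsEffect A → IsEffect B → IsEffect (op A B)

/-- Condition 1 (Duality): for all effects `A, B` and densities `ρ`, the operator
`A ∘ ρ` is trace-class and `Tr((A∘ρ)B) = Tr(ρ(A∘B))`. -/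
def DualityCond (op : (H →L[ℂ] H) → (H →L[ℂ] H) → (H →L[ℂ] H)) : Prop :=
  ∀ A B ρ : H →L[ℂ] H, IsEffect A → IsEffect B → IsDensity ρ →
    IsTraceClass (op A ρ) ∧ traceOp (op A ρ * B) = traceOp (ρ * op A B)

/-- Condition 2 (Unit): `A ∘ I = I ∘ A = A` for every effect `A`. -/
def UnitCond (op : (H →L[ℂ] H) → (H →L[ℂ] H) → (H →L[ℂ] H)) : Prop :=
  ∀ A : H →L[ℂ] H, IsEffect A → op A 1 = A ∧ op 1 A = A

/-- Condition 3 (Weak associativity): `A² ∘ B = A ∘ (A ∘ B)` for all effects `A, B`. -/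
def WeakAssocCond (op : (H →L[ℂ] H) → (H →L[ℂ] H) → (H →L[ℂ] H)) : Prop :=
  ∀ A B : H →L[ℂ] H, IsEffect A → IsEffect B → op (A * A) B = op A (op A B)

/-- Condition 4 (Continuity): for each fixed effect `B`, the map `A ↦ A ∘ B` is
continuous on `E(H)` for the strong operator topology. -/
def ContinuityCond (op : (H →L[ℂ] H) → (H →L[ℂ] H) → (H →L[ℂ] H)) : Prop :=
  ∀ B : H →L[ℂ] H, IsEffect B →
    @ContinuousOn _ _ (sot H) (sot H) (fun A => op A B) {A | IsEffect A}

/-- Condition 5 (Purity): for every effect `A` and every rank-one orthogonal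
projection `p`, the operator `A ∘ p` has rank at most `1`. -/
def PurityCond (op : (H →L[ℂ] H) → (H →L[ℂ] H) → (H →L[ℂ] H)) : Prop :=
  ∀ A p : H →L[ℂ] H, IsEffect A → IsRankOneProjection p →
    LinearMap.rank ((op A p) : H →ₗ[ℂ] H) ≤ 1

/-!
Testing `A ∘ (B + C)` against the pure state `ρ = P_u` of a unit vector `u`, duality turns the
diagonal entry `⟪u, (A ∘ X) u⟫` into `Tr((A ∘ P_u) X)`, which is additive in `X`: `A ∘ P_u` is a
positive trace-class operator, so `(A ∘ P_u) X` has a summable diagonal for every bounded `X`.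
A complex operator is determined by its diagonal entries at unit vectors.
-/

open ContinuousLinearMap InnerProductSpace

theorem summable_inner_of_summable_norm_sq {ι 𝕜 E : Type*} [RCLike 𝕜] [NormedAddCommGroup E]
    [InnerProductSpace 𝕜 E] {f g : ι → E} (hf : Summable fun i => ‖f i‖ ^ 2)
    (hg : Summable fun i => ‖g i‖ ^ 2) : Summable fun i => ⟪f i, g i⟫_𝕜 := by
  refine Summable.of_norm_bounded ((hf.add hg).div_const 2) fun i => ?_
  have := norm_inner_le_norm (𝕜 := 𝕜) (f i) (g i)
  nlinarith [sq_nonneg (‖f i‖ - ‖g i‖)]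

theorem ContinuousLinearMap.ext_inner_self_of_norm_eq_one {V : Type*} [NormedAddCommGroup V]
    [InnerProductSpace ℂ V] {S T : V →L[ℂ] V}
    (h : ∀ u : V, ‖u‖ = 1 → ⟪u, S u⟫_ℂ = ⟪u, T u⟫_ℂ) : S = T := by
  refine coe_injective ((ext_inner_map _ _).mp fun x => ?_)
  rcases eq_or_ne x 0 with rfl | hx
  · simp
  obtain ⟨u, hu, c, rfl⟩ : ∃ u : V, ‖u‖ = 1 ∧ ∃ c : ℂ, x = c • u :=
    ⟨_, norm_smul_inv_norm hx, _, (smul_inv_smul₀ (by simpa using hx) x).symm⟩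
  simp only [coe_coe, map_smul, inner_smul_left, inner_smul_right, ← inner_conj_symm (S u) u,
    ← inner_conj_symm (T u) u, h u hu]

namespace HilbertBasis

variable {ι κ 𝕜 E F : Type*} [RCLike 𝕜]
  [NormedAddCommGroup E] [InnerProductSpace 𝕜 E] [NormedAddCommGroup F] [InnerProductSpace 𝕜 F]

theorem hasSum_norm_inner_sq (b : HilbertBasis ι 𝕜 E) (x : E) :
    HasSum (fun i => ‖⟪b i, x⟫_𝕜‖ ^ 2) (‖x‖ ^ 2) := by
  have h := lp.hasSum_norm (p := 2) (by norm_num) (b.repr x)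
  simp only [b.repr_apply_apply, LinearIsometryEquiv.norm_map, ENNReal.toReal_ofNat,
    Real.rpow_two] at h
  exact h

theorem tsum_enorm_inner_sq (b : HilbertBasis ι 𝕜 E) (x : E) :
    ∑' i, ‖⟪b i, x⟫_𝕜‖ₑ ^ 2 = ‖x‖ₑ ^ 2 := by
  simp_rw [← ofReal_norm, ← ENNReal.ofReal_pow (norm_nonneg _)]
  rw [← ENNReal.ofReal_tsum_of_nonneg (fun _ => by positivity) (b.hasSum_norm_inner_sq x).summable,
    (b.hasSum_norm_inner_sq x).tsum_eq]

theorem tsum_enorm_apply_sq_eq_adjoint [CompleteSpace E] [CompleteSpace F]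
    (b : HilbertBasis ι 𝕜 E) (b' : HilbertBasis κ 𝕜 F) (T : E →L[𝕜] F) :
    ∑' i, ‖T (b i)‖ₑ ^ 2 = ∑' j, ‖adjoint T (b' j)‖ₑ ^ 2 :=
  calc ∑' i, ‖T (b i)‖ₑ ^ 2 = ∑' i, ∑' j, ‖⟪b' j, T (b i)⟫_𝕜‖ₑ ^ 2 := by
        simp_rw [b'.tsum_enorm_inner_sq]
    _ = ∑' j, ∑' i, ‖⟪b i, adjoint T (b' j)⟫_𝕜‖ₑ ^ 2 := by
        rw [ENNReal.tsum_comm]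
        refine tsum_congr fun j => tsum_congr fun i => ?_
        rw [adjoint_inner_right, ← inner_conj_symm, RCLike.enorm_conj]
    _ = ∑' j, ‖adjoint T (b' j)‖ₑ ^ 2 := by simp_rw [b.tsum_enorm_inner_sq]

theorem summable_norm_apply_sq_of_adjoint [CompleteSpace E] [CompleteSpace F]
    (b : HilbertBasis ι 𝕜 E) (b' : HilbertBasis κ 𝕜 F) {T : E →L[𝕜] F}
    (hT : Summable fun j => ‖adjoint T (b' j)‖ ^ 2) : Summable fun i => ‖T (b i)‖ ^ 2 := by
  have hfin : ∑' i, ‖T (b i)‖ₑ ^ 2 ≠ ⊤ := by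
    simp_rw [b.tsum_enorm_apply_sq_eq_adjoint b', ← ofReal_norm,
      ← ENNReal.ofReal_pow (norm_nonneg _)]
    rw [← ENNReal.ofReal_tsum_of_nonneg (fun _ => by positivity) hT]
    exact ENNReal.ofReal_ne_top
  simpa using ENNReal.summable_toReal hfin

theorem hasSum_inner_rankOne_apply (b : HilbertBasis ι 𝕜 E) (x y : E) :
    HasSum (fun i => ⟪b i, rankOne 𝕜 x y (b i)⟫_𝕜) ⟪y, x⟫_𝕜 := by
  simpa [inner_smul_right] using b.hasSum_inner_mul_inner y x

/-- Writing `D = S * S` with `S = √D`, the diagonal entry `⟪b i, D X (b i)⟫ = ⟪S (b i), S X (b i)⟫`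
pairs two square-summable families: `S` is Hilbert–Schmidt because `D` has a summable diagonal,
and so is `S X`, since its adjoint `X† S` is. -/
theorem summable_inner_mul_apply_of_nonneg {ι : Type*} (b : HilbertBasis ι ℂ H)
    {D : H →L[ℂ] H} (hD : 0 ≤ D) (hDb : Summable fun i => ⟪b i, D (b i)⟫_ℂ) (X : H →L[ℂ] H) :
    Summable fun i => ⟪b i, (D * X) (b i)⟫_ℂ := by
  set S := CFC.sqrt D
  have hS : IsSelfAdjoint S := (CFC.sqrt_nonneg D).isSelfAdjoint
  have hD_inner : ∀ x y : H, ⟪x, D y⟫_ℂ = ⟪S x, S y⟫_ℂ := fun x y => by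
    rw [← CFC.sqrt_mul_sqrt_self D hD, mul_apply_eq_comp, ← adjoint_inner_left,
      hS.adjoint_eq]
  have hSb : Summable fun i => ‖S (b i)‖ ^ 2 :=
    (Complex.reCLM.summable hDb).congr fun i => by
      rw [Complex.reCLM_apply, hD_inner, inner_self_eq_norm_sq_to_K]
      norm_cast
  have hSXb : Summable fun i => ‖(S * X) (b i)‖ ^ 2 := by
    refine b.summable_norm_apply_sq_of_adjoint b <| Summable.of_nonneg_of_le
      (fun _ => by positivity) (fun j => ?_) (hSb.mul_left (‖adjoint X‖ ^ 2))
    rw [← star_eq_adjoint, star_mul, hS.star_eq, star_eq_adjoint, ← mul_pow]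
    exact pow_le_pow_left₀ (norm_nonneg _) ((adjoint X).le_opNorm _) 2
  exact (summable_inner_of_summable_norm_sq hSb hSXb).congr fun i => (hD_inner _ _).symm

end HilbertBasis

theorem isTraceClass_iff_of_nonneg {D : H →L[ℂ] H} (hD : 0 ≤ D) :
    IsTraceClass D ↔ Summable fun i => ⟪(stdBasis H i : H), D (stdBasis H i)⟫_ℂ := by
  rw [IsTraceClass, sqrtOp, hD.isSelfAdjoint.star_eq, CFC.sqrt_mul_self D hD]

theorem traceOp_mul_add_of_nonneg {D : H →L[ℂ] H} (hD : 0 ≤ D) (hDtc : IsTraceClass D)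
    (X Y : H →L[ℂ] H) : traceOp (D * (X + Y)) = traceOp (D * X) + traceOp (D * Y) := by
  have hDb := (isTraceClass_iff_of_nonneg hD).mp hDtc
  simp only [traceOp, mul_add, add_apply, inner_add_right]
  exact ((stdBasis H).summable_inner_mul_apply_of_nonneg hD hDb X).tsum_add
    ((stdBasis H).summable_inner_mul_apply_of_nonneg hD hDb Y)

theorem isEffect_projVec {u : H} (hu : ‖u‖ = 1) : IsEffect (projVec u) :=
  (isStarProjection_rankOne_self hu).mem_Icc

theorem isDensity_projVec {u : H} (hu : ‖u‖ = 1) : IsDensity (projVec u) := by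
  have hP : 0 ≤ projVec u := (isEffect_projVec hu).1
  have htr := (stdBasis H).hasSum_inner_rankOne_apply u u
  refine ⟨hP, (isTraceClass_iff_of_nonneg hP).mpr htr.summable, ?_⟩
  rw [traceOp, projVec, ← rankOne_def, htr.tsum_eq, inner_self_eq_norm_sq_to_K, hu]
  norm_num

theorem traceOp_projVec_mul (u : H) (X : H →L[ℂ] H) : traceOp (projVec u * X) = ⟪u, X u⟫_ℂ := by
  rw [traceOp, projVec, ← rankOne_def, mul_def, rankOne_comp,
    ((stdBasis H).hasSum_inner_rankOne_apply _ _).tsum_eq, adjoint_inner_left]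

/-- If `∘ : E(H) × E(H) → E(H)` satisfies the duality condition, then
`A ∘ (B + C) = A ∘ B + A ∘ C` for all effects `A, B, C` with `B + C` an effect. -/
theorem duality_implies_additive
    (op : (H →L[ℂ] H) → (H →L[ℂ] H) → (H →L[ℂ] H)) (hmap : EffectClosed op)
    (hdual : DualityCond op) :
    ∀ A B C : H →L[ℂ] H, IsEffect A → IsEffect B → IsEffect C → IsEffect (B + C) →
      op A (B + C) = op A B + op A C := by
  intro A B C hA hB hC hBC
  refine ext_inner_self_of_norm_eq_one fun u hu => ?_
  have hρ := isDensity_projVec hu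
  have hD : 0 ≤ op A (projVec u) := (hmap A _ hA (isEffect_projVec hu)).1
  have hDtc : IsTraceClass (op A (projVec u)) := (hdual A B _ hA hB hρ).1
  have dual : ∀ X, IsEffect X → ⟪u, op A X u⟫_ℂ = traceOp (op A (projVec u) * X) :=
    fun X hX => by rw [(hdual A X _ hA hX hρ).2, traceOp_projVec_mul]
  rw [add_apply, inner_add_right, dual _ hBC, dual _ hB, dual _ hC,
    traceOp_mul_add_of_nonneg hD hDtc]

end
end

section
/- Let H be a complex Hilbert space, let A be an invertible effect on H (0 ≤ A ≤ I and A invertible), and let U be a partial isometry on H such that A = A^{1/2}U*UA^{1/2} and such that A^{1/2}U*BUA^{1/2} = UA^{1/2}BA^{1/2}U* for every effect B ∈ E(H). Then U is unitary, UA = AU, and U² = μI for some complex number μ with |μ| = 1. -/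
/-!
Common setup: effects, density operators, trace, square roots and the strong
operator topology on a complex Hilbert space `H`, together with the five
conditions (duality, unit, weak associativity, continuity, purity) defining a
sequential product on the set `E(H)` of quantum effects.
-/

set_option maxHeartbeats 1000000
set_option synthInstance.maxHeartbeats 1000000

open scoped InnerProductSpace ComplexOrder
open Filter

noncomputable section

variable (H : Type*) [NormedAddCommGroup H] [InnerProductSpace ℂ H] [CompleteSpace H]

variable {H}

/-!
Cancelling the invertible `A^{1/2}` in `A = A^{1/2}U*UA^{1/2}` gives `U*U = I`, and taking
`B = I` in the second identity gives `UAU* = A`; as `A` is invertible, `U` is onto, hence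
unitary, and it commutes with `A` and therefore with `A^{1/2}`. Cancelling `A^{1/2}` in the
second identity now gives `U*BU = UBU*`, i.e. `U²` commutes with every effect `B`. Taking for
`B` the projection onto the line through a vector shows that every vector is an eigenvector of
`U²`, so `U²` is a scalar, of modulus one since `U²` is unitary.
-/

theorem IsUnit.mul_mul_cancel {R : Type*} [Monoid R] {S X Y : R} (hS : IsUnit S)
    (h : S * X * S = S * Y * S) : X = Y :=
  hS.mul_left_cancel (hS.mul_right_cancel h)

section Unitary

variable {R : Type*} [Monoid R] [StarMul R]

theorem mem_unitary_of_star_mul_self_of_conj_eq {U A : R} (hA : IsUnit A)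
    (hUU : star U * U = 1) (hconj : U * A * star U = A) : U ∈ unitary R := by
  obtain ⟨u, rfl⟩ := hA
  have hright : U * (↑u * star U * ↑u⁻¹) = 1 := by
    rw [← mul_assoc, ← mul_assoc, hconj, u.mul_inv]
  have hstar : star U = ↑u * star U * ↑u⁻¹ := left_inv_eq_right_inv hUU hright
  exact Unitary.mem_iff.mpr ⟨hUU, hstar ▸ hright⟩

theorem commute_of_mem_unitary_of_conj_eq {U A : R} (hU : U ∈ unitary R)
    (hconj : U * A * star U = A) : Commute U A := by
  calc U * A = U * A * (star U * U) := by rw [Unitary.star_mul_self_of_mem hU, mul_one]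
    _ = A * U := by rw [← mul_assoc, hconj]

theorem commute_mul_self_of_star_conj_eq_conj {U B : R} (hU : U ∈ unitary R)
    (h : star U * B * U = U * B * star U) : Commute (U * U) B := by
  have hUU := Unitary.star_mul_self_of_mem hU
  have hUU' := Unitary.mul_star_self_of_mem hU
  calc U * U * B = U * (U * B * star U) * U := by
        simp only [mul_assoc, hUU, mul_one]
    _ = U * (star U * B * U) * U := by rw [h]
    _ = B * (U * U) := by simp only [← mul_assoc, hUU', one_mul]

end Unitary

theorem exists_norm_eq_one_of_mem_unitary_of_eq_smul_one {R : Type*} [NormedRing R]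
    [StarRing R] [CStarRing R] [NormedAlgebra ℂ R] {T : R} {μ : ℂ} (hT : T ∈ unitary R)
    (hμ : T = μ • 1) : ∃ ν : ℂ, ‖ν‖ = 1 ∧ T = ν • 1 := by
  rcases subsingleton_or_nontrivial R with hR | hR
  · exact ⟨1, norm_one, Subsingleton.elim _ _⟩
  refine ⟨μ, ?_, hμ⟩
  rw [← CStarRing.norm_of_mem_unitary hT, hμ, norm_smul, CStarRing.norm_one, mul_one]

theorem isEffect_one : IsEffect (1 : H →L[ℂ] H) := ⟨zero_le_one, le_rfl⟩

theorem IsStarProjection.isEffect {P : H →L[ℂ] H} (hP : IsStarProjection P) : IsEffect P :=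
  ⟨hP.nonneg, sub_nonneg.mp hP.one_sub.nonneg⟩

theorem exists_eq_smul_one_of_forall_commute_isEffect {T : H →L[ℂ] H}
    (hT : ∀ B : H →L[ℂ] H, IsEffect B → Commute T B) : ∃ μ : ℂ, T = μ • 1 := by
  have heigen : ∀ v : H, T v ∈ ℂ ∙ v := fun v => by
    set P := (ℂ ∙ v).starProjection
    have hPv : P v = v :=
      Submodule.starProjection_eq_self_iff.mpr (Submodule.mem_span_singleton_self v)
    have hcomm := congr($(hT P isStarProjection_starProjection.isEffect) v)
    simp only [mul_apply_eq_comp, hPv] at hcomm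
    exact hcomm ▸ Submodule.starProjection_apply_mem _ _
  obtain ⟨μ, hμ⟩ := LinearMap.exists_eq_smul_id_of_forall_notLinearIndependent
    (f := (T : H →ₗ[ℂ] H)) fun v hli => by
      obtain ⟨c, hc⟩ := Submodule.mem_span_singleton.mp (heigen v)
      have := (LinearIndependent.pair_iff.mp hli c (-1) (by simp [hc]))
      exact one_ne_zero (neg_eq_zero.mp this.2)
  exact ⟨μ, ContinuousLinearMap.coe_injective hμ⟩

theorem partial_isometry_is_unitary_general
    (A : H →L[ℂ] H) (hA : IsEffect A) (hinv : IsUnit A)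
    (U : H →L[ℂ] H)
    (h1 : A = sqrtOp A * (star U * U) * sqrtOp A)
    (h2 : ∀ B : H →L[ℂ] H, IsEffect B →
      sqrtOp A * star U * B * U * sqrtOp A = U * sqrtOp A * B * sqrtOp A * star U) :
    U ∈ unitary (H →L[ℂ] H) ∧ U * A = A * U ∧
      ∃ μ : ℂ, ‖μ‖ = 1 ∧ U * U = μ • (1 : H →L[ℂ] H) := by
  set S := sqrtOp A
  have hS : IsUnit S := (CFC.isUnit_sqrt_iff A hA.1).mpr hinv
  have hSS : S * S = A := CFC.sqrt_mul_sqrt_self A hA.1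
  have hUU : star U * U = 1 := hS.mul_mul_cancel (by rw [← h1, mul_one, hSS])
  have hconj : U * A * star U = A := by
    simpa only [mul_one, mul_assoc, ← h1, hSS] using (h2 1 isEffect_one).symm
  have hU : U ∈ unitary (H →L[ℂ] H) := mem_unitary_of_star_mul_self_of_conj_eq hinv hUU hconj
  have hUA : Commute U A := commute_of_mem_unitary_of_conj_eq hU hconj
  have hSU : Commute S U := by
    simpa only [S, sqrtOp, CFC.sqrt_eq_cfc] using hUA.symm.cfc_nnreal NNReal.sqrt
  have hSsa : IsSelfAdjoint S := (CFC.sqrt_nonneg A).isSelfAdjoint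
  have hSU' : Commute S (star U) := hSsa.star_eq ▸ hSU.star_star
  have hcentral : ∀ B, IsEffect B → Commute (U * U) B := fun B hB =>
    commute_mul_self_of_star_conj_eq_conj hU <| hS.mul_mul_cancel <|
      calc S * (star U * B * U) * S = S * star U * B * U * S := by simp only [mul_assoc]
        _ = U * S * B * S * star U := h2 B hB
        _ = S * (U * B * star U) * S := by
          rw [← hSU.eq, mul_assoc _ S, hSU'.eq]
          simp only [mul_assoc]
  obtain ⟨μ, hμ⟩ := exists_eq_smul_one_of_forall_commute_isEffect hcentral
  exact ⟨hU, hUA.eq, exists_norm_eq_one_of_mem_unitary_of_eq_smul_one (mul_mem hU hU) hμ⟩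

/-- If `A` is an invertible effect and `U` is a partial isometry with
`A = A^{1/2}U*UA^{1/2}` and `A^{1/2}U*BUA^{1/2} = UA^{1/2}BA^{1/2}U*` for every effect `B`,
then `U` is unitary, `UA = AU`, and `U² = μI` for some complex `μ` with `|μ| = 1`. -/
theorem partial_isometry_is_unitary
    (A : H →L[ℂ] H) (hA : IsEffect A) (hinv : IsUnit A)
    (U : H →L[ℂ] H) (hU : IsIdempotentElem (star U * U))
    (h1 : A = sqrtOp A * (star U * U) * sqrtOp A)
    (h2 : ∀ B : H →L[ℂ] H, IsEffect B →
      sqrtOp A * star U * B * U * sqrtOp A = U * sqrtOp A * B * sqrtOp A * star U) :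
    U ∈ unitary (H →L[ℂ] H) ∧ U * A = A * U ∧
      ∃ μ : ℂ, ‖μ‖ = 1 ∧ U * U = μ • (1 : H →L[ℂ] H) :=
  partial_isometry_is_unitary_general A hA hinv U h1 h2

end
end
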